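/- (Expansion of x^n in q-Euler polynomials.) For every integer n ≥ 0 and all x ∈ ℂ: x^n = (2^{n−1}/(−1;q)_n) · ( Σ_{k=0}^{n} [n choose k]_q ((−1;q)_{n−k}/2^{n−k}) E_{k,q}(x) + E_{n,q}(x) ). (This is the q-analogue of x^n = (1/2)[Σ_{k=0}^{n} C(n,k) E_k(x) + E_n(x)].) -/

import Mathlib

/-!
Put `y = 0`: since `𝓔_q(0) = 1`, the generating function says
`(Σ E_{k,q}(x) tᵏ/[k]_q!) · (𝓔_q(t) + 1) = 2 𝓔_q(tx)`. Comparing coefficients of `tⁿ` and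
multiplying by `[n]_q!` turns the Cauchy product into a sum weighted by
`[n]_q!/([k]_q! [n-k]_q!) = [n choose k]_q`, the `+ 1` contributes `E_{n,q}(x)`, and the right side
contributes `2 (-1;q)_n xⁿ / 2ⁿ`; solving for `xⁿ` is the claim.
-/

open Finset PowerSeries

/-- The `q`-number `[n]_q = (1 - q^n)/(1 - q)`. -/
noncomputable def qNum (q : ℂ) (n : ℕ) : ℂ := (1 - q ^ n) / (1 - q)

/-- The `q`-factorial `[n]_q!`. -/
noncomputable def qFact (q : ℂ) : ℕ → ℂ
  | 0 => 1
  | n + 1 => qNum q (n + 1) * qFact q n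

/-- The `q`-shifted factorial `(a; q)_n = ∏_{j=0}^{n-1} (1 - q^j a)`. -/
noncomputable def qShift (a q : ℂ) (n : ℕ) : ℂ := ∏ j ∈ Finset.range n, (1 - q ^ j * a)

/-- The Gaussian binomial coefficient `[n choose k]_q = (q;q)_n / ((q;q)_{n-k} (q;q)_k)`. -/
noncomputable def qBinom (q : ℂ) (n k : ℕ) : ℂ :=
  qShift q q n / (qShift q q (n - k) * qShift q q k)

/-- The formal power series (in `t`) `𝓔_q(tx) = Σ_{n≥0} (-1;q)_n (x)^n t^n / (2^n [n]_q!)`. -/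
noncomputable def qExp (q x : ℂ) : PowerSeries ℂ :=
  PowerSeries.mk fun n => qShift (-1) q n * x ^ n / (2 ^ n * qFact q n)

/-- The generating series `Σ_{n≥0} a_n t^n / [n]_q!` of a sequence `a`. -/
noncomputable def qGen (q : ℂ) (a : ℕ → ℂ) : PowerSeries ℂ :=
  PowerSeries.mk fun n => a n / qFact q n

/-- The `q`-addition `(x ⊕_q y)^n`. -/
noncomputable def qAdd (q x y : ℂ) (n : ℕ) : ℂ :=
  ∑ k ∈ Finset.range (n + 1),
    qBinom q n k * (qShift (-1) q k * qShift (-1) q (n - k) / 2 ^ n) * x ^ k * y ^ (n - k)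

lemma pow_ne_of_norm_lt_one {𝕜 : Type*} [NormedDivisionRing 𝕜] {q c : 𝕜} (hq : ‖q‖ < 1)
    (hc : ‖c‖ = 1) {m : ℕ} (hm : m ≠ 0) : q ^ m ≠ c := by
  intro h
  have : ‖q‖ ^ m < 1 := pow_lt_one₀ (norm_nonneg q) hq hm
  rw [← norm_pow, h, hc] at this
  exact this.false

lemma qNum_mul_one_sub (q : ℂ) (n : ℕ) : qNum q n * (1 - q) = 1 - q ^ n := by
  rcases eq_or_ne q 1 with rfl | hq
  · simp [qNum]
  · exact div_mul_cancel₀ _ (sub_ne_zero.2 hq.symm)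

lemma qFact_mul_one_sub_pow (q : ℂ) (n : ℕ) : qFact q n * (1 - q) ^ n = qShift q q n := by
  induction n with
  | zero => simp [qFact, qShift]
  | succ n ih =>
    rw [qFact, qShift, prod_range_succ, ← qShift, ← ih]
    linear_combination (qFact q n * (1 - q) ^ n) * qNum_mul_one_sub q (n + 1)

lemma qFact_ne_zero {q : ℂ} (hq : ‖q‖ < 1) (n : ℕ) : qFact q n ≠ 0 := by
  induction n with
  | zero => simp [qFact]
  | succ n ih =>
    refine mul_ne_zero (div_ne_zero ?_ ?_) ih
    · exact sub_ne_zero.2 (pow_ne_of_norm_lt_one hq norm_one n.succ_ne_zero).symm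
    · exact sub_ne_zero.2 (by simpa using (pow_ne_of_norm_lt_one hq norm_one one_ne_zero).symm)

lemma qShift_neg_one_ne_zero {q : ℂ} (hq : ‖q‖ < 1) (n : ℕ) : qShift (-1) q n ≠ 0 := by
  refine prod_ne_zero_iff.2 fun j _ => ?_
  rcases eq_or_ne j 0 with rfl | hj
  · norm_num
  · rw [mul_neg_one, sub_neg_eq_add, add_comm, ← sub_neg_eq_add, sub_ne_zero]
    exact pow_ne_of_norm_lt_one hq (by simp) hj

lemma qBinom_eq_qFact_div {q : ℂ} (hq : q ≠ 1) {n k : ℕ} (hk : k ≤ n) :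
    qBinom q n k = qFact q n / (qFact q k * qFact q (n - k)) := by
  have hpow : (1 - q) ^ n = (1 - q) ^ k * (1 - q) ^ (n - k) := by
    rw [← pow_add, Nat.add_sub_cancel' hk]
  have hsub : (1 - q) ^ k * (1 - q) ^ (n - k) ≠ 0 := by
    rw [← hpow]
    exact pow_ne_zero _ (sub_ne_zero.2 hq.symm)
  rw [qBinom, ← qFact_mul_one_sub_pow, ← qFact_mul_one_sub_pow, ← qFact_mul_one_sub_pow, hpow,
    mul_comm (qFact q (n - k) * _), mul_mul_mul_comm, mul_div_mul_right _ _ hsub]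

lemma qExp_zero (q : ℂ) : qExp q 0 = 1 := by
  ext n
  rcases n with _ | n <;> simp [qExp, qShift, qFact, coeff_one]

lemma coeff_qGen (q : ℂ) (a : ℕ → ℂ) (n : ℕ) : coeff n (qGen q a) = a n / qFact q n :=
  coeff_mk _ _

lemma coeff_qExp (q x : ℂ) (n : ℕ) :
    coeff n (qExp q x) = qShift (-1) q n * x ^ n / (2 ^ n * qFact q n) :=
  coeff_mk _ _

lemma qGen_mul_qExp {q : ℂ} (hq : ‖q‖ < 1) (a : ℕ → ℂ) (y : ℂ) :
    qGen q a * qExp q y = qGen q fun n => ∑ k ∈ Finset.range (n + 1),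
      qBinom q n k * (qShift (-1) q (n - k) / 2 ^ (n - k)) * a k * y ^ (n - k) := by
  ext n
  rw [coeff_mul, Nat.sum_antidiagonal_eq_sum_range_succ_mk, coeff_qGen, sum_div]
  refine sum_congr rfl fun k hk => ?_
  have hne : q ≠ 1 := fun h => by simp [h] at hq
  rw [coeff_qGen, coeff_qExp, qBinom_eq_qFact_div hne (Nat.le_of_lt_succ (mem_range.1 hk))]
  have hfact := qFact_ne_zero hq
  field_simp [hfact n]

theorem pow_eq_sum_qEuler_general (q : ℂ) (hq1 : ‖q‖ < 1)
    (E : ℂ → ℂ → ℕ → ℂ)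
    (hE : ∀ x y : ℂ, qGen q (E x y) * (qExp q 1 + 1) = 2 * qExp q x * qExp q y)
    (n : ℕ) (x : ℂ) :
    x ^ n = (2 : ℂ) ^ ((n : ℤ) - 1) / qShift (-1) q n *
      ((∑ k ∈ Finset.range (n + 1),
          qBinom q n k * (qShift (-1) q (n - k) / 2 ^ (n - k)) * E x 0 k) + E x 0 n) := by
  have hcoeff := congrArg (coeff n) (hE x 0)
  have hC : (2 : ℂ⟦X⟧) = C 2 := (map_ofNat C 2).symm
  rw [qExp_zero, mul_one, mul_add, mul_one, qGen_mul_qExp hq1, map_add, coeff_qGen, coeff_qGen,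
    hC, coeff_C_mul, coeff_qExp] at hcoeff
  simp only [one_pow, mul_one] at hcoeff
  have hfact := qFact_ne_zero hq1 n
  have hshift := qShift_neg_one_ne_zero hq1 n
  rw [zpow_sub_one₀ two_ne_zero, zpow_natCast]
  field_simp at hcoeff ⊢
  linear_combination -hcoeff

/-- Expansion of `x^n` in `q`-Euler polynomials:
`x^n = (2^{n-1}/(-1;q)_n)(Σ_{k=0}^n [n choose k]_q ((-1;q)_{n-k}/2^{n-k}) E_{k,q}(x) + E_{n,q}(x))`. -/
theorem pow_eq_sum_qEuler (q : ℂ) (hq0 : 0 < ‖q‖) (hq1 : ‖q‖ < 1)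
    (E : ℂ → ℂ → ℕ → ℂ)
    (hE : ∀ x y : ℂ, qGen q (E x y) * (qExp q 1 + 1) = 2 * qExp q x * qExp q y)
    (n : ℕ) (x : ℂ) :
    x ^ n = (2 : ℂ) ^ ((n : ℤ) - 1) / qShift (-1) q n *
      ((∑ k ∈ Finset.range (n + 1),
          qBinom q n k * (qShift (-1) q (n - k) / 2 ^ (n - k)) * E x 0 k) + E x 0 n) :=
  pow_eq_sum_qEuler_general q hq1 E hE n x
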